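/- arXiv:2006.15178 — 5 statements merged into one kernel-verified Lean document; each statement's English description precedes it below -/
import Mathlib

section
/- Let Sigma = {a_1,...,a_k}, m >= 1, and u = a_1^m a_2^m ... a_k^m. Then perm(u) has at least (m+1)^k Nerode right-congruence classes among words of the form a_1^{m_1}...a_k^{m_k} with 0 <= m_i <= m; concretely, if (m_1,...,m_k) != (n_1,...,n_k) with all entries in {0,...,m}, then the words a_1^{m_1}...a_k^{m_k} and a_1^{n_1}...a_k^{n_k} are not Nerode-equivalent with respect to perm(u). -/
open List

/-- Commutative (permutation) closure of a language. -/
def permCl {α : Type} (L : Language α) : Language α := {w | ∃ v ∈ L, w.Perm v}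

/-- A path in an NFA from a state to a state, labeled by a word, visiting the given
list of states. -/
inductive NPath {α σ : Type} (M : NFA α σ) : σ → List α → σ → List σ → Prop
  | nil (q : σ) : NPath M q [] q [q]
  | cons {q q' p : σ} {a : α} {w : List α} {qs : List σ} :
      q' ∈ M.step q a → NPath M q' w p qs → NPath M q (a :: w) p (q :: qs)

/-- The set of words labeling simple accepting paths (no repeated state). -/
def Lsimple {α σ : Type} (M : NFA α σ) : Language α :=
  {w | ∃ s ∈ M.start, ∃ f ∈ M.accept, ∃ qs, NPath M s w f qs ∧ qs.Nodup}

/-- Reachability between states of an NFA. -/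
def Reach {α σ : Type} (M : NFA α σ) (p q : σ) : Prop := ∃ w : List α, q ∈ M.evalFrom {p} w

/-- A partially ordered (weakly acyclic) NFA: reachability is antisymmetric,
equivalently the only loops are self-loops. -/
def PartiallyOrdered {α σ : Type} (M : NFA α σ) : Prop :=
  ∀ p q, Reach M p q → Reach M q p → p = q

/-- A partial deterministic finite automaton viewed as an NFA. -/
def IsPDFA {α σ : Type} (M : NFA α σ) : Prop :=
  M.start.Subsingleton ∧ ∀ q a, (M.step q a).Subsingleton

/-- `L` is recognized by a deterministic finite automaton with at most `N` states. -/
def RecognizableWithin {α : Type} (L : Language α) (N : ℕ) : Prop :=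
  ∃ (σ : Type) (_ : Fintype σ) (D : DFA α σ), Fintype.card σ ≤ N ∧ D.accepts = L

/-- `IsShuffle u v w` : `w` is an interleaving of `u` and `v`. -/
inductive IsShuffle {α : Type} : List α → List α → List α → Prop
  | nil : IsShuffle [] [] []
  | left {u v w : List α} {a : α} : IsShuffle u v w → IsShuffle (a :: u) v (a :: w)
  | right {u v w : List α} {a : α} : IsShuffle u v w → IsShuffle u (a :: v) (a :: w)

/-- Shuffle of two languages. -/
def lshuffle {α : Type} (U V : Language α) : Language α :=
  {w | ∃ u ∈ U, ∃ v ∈ V, IsShuffle u v w}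

/-- Iterated shuffle of a list of languages. -/
def shuffleList {α : Type} : List (Language α) → Language α
  | [] => {[]}
  | L :: Ls => lshuffle L (shuffleList Ls)

/-- Unary projection of a language onto the letter `a`. -/
def proj {α : Type} [DecidableEq α] (a : α) (L : Language α) : Language α :=
  (fun u => List.replicate (u.count a) a) '' L

/-- A strict shuffle language: it equals the shuffle of its unary projections over
the whole alphabet. -/
def IsStrictShuffle {α : Type} [Fintype α] [DecidableEq α] (L : Language α) : Prop :=
  L = shuffleList ((Finset.univ : Finset α).toList.map (fun a => proj a L))

/-- `Γ^*` : all words over the subalphabet `Γ`. -/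
def subStar {α : Type} (Γ : Set α) : Language α := {w | ∀ x ∈ w, x ∈ Γ}

/-- The APC atom `Σ₀^* a₁ Σ₁^* ⋯ aₙ Σₙ^*`, given by the initial subalphabet and the
list of pairs `(aᵢ, Σᵢ)`. -/
def apcAtom {α : Type} (Γ0 : Set α) : List (α × Set α) → Language α
  | [] => subStar Γ0
  | (a, Γ) :: rest => subStar Γ0 * (({[a]} : Language α) * apcAtom Γ rest)

/-- An Alphabetical Pattern Constraint language: a finite union of APC atoms. -/
def IsAPC {α : Type} (L : Language α) : Prop :=
  ∃ parts : List (Set α × List (α × Set α)),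
    L = {w | ∃ p ∈ parts, w ∈ apcAtom p.1 p.2}

lemma countF {α : Type} [DecidableEq α] {k : ℕ} (e : Fin k ≃ α) (c : Fin k → ℕ) (a : α) :
    (((List.finRange k).map fun i => List.replicate (c i) (e i)).flatten).count a
      = c (e.symm a) := by
  rw [List.count_flatten, List.map_map]
  have h : ((List.count a ∘ fun i => List.replicate (c i) (e i)))
      = fun i => if i = e.symm a then c i else 0 := by
    funext i
    simp only [Function.comp_apply, List.count_replicate, beq_iff_eq]
    by_cases h : i = e.symm a
    · subst h; simp
    · rw [if_neg, if_neg h]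
      intro hc
      exact h (by rw [← hc]; simp)
  rw [h, ← Fin.sum_univ_def, Finset.sum_ite_eq' Finset.univ (e.symm a) c,
    if_pos (Finset.mem_univ _)]

/-- For `u = a₁^m ⋯ a_k^m` and distinct exponent vectors `(m₁,…,m_k) ≠
`(n₁,…,n_k)` with entries in `{0,…,m}`, the words `a₁^{m₁}⋯a_k^{m_k}` and
`a₁^{n₁}⋯a_k^{n_k}` are not Nerode-equivalent with respect to `perm(u)`. -/
theorem stmt9 {α : Type} [DecidableEq α] (k m : ℕ) (hm : 1 ≤ m) (e : Fin k ≃ α)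
    (u : List α) (hu : u = ((List.finRange k).map fun i => List.replicate m (e i)).flatten)
    (ms ns : Fin k → ℕ) (hms : ∀ i, ms i ≤ m) (hns : ∀ i, ns i ≤ m) (hne : ms ≠ ns) :
    ∃ z : List α,
      ¬((((List.finRange k).map fun i => List.replicate (ms i) (e i)).flatten ++ z
            ∈ permCl ({u} : Language α))
        ↔ (((List.finRange k).map fun i => List.replicate (ns i) (e i)).flatten ++ z
            ∈ permCl ({u} : Language α))) := by
  obtain ⟨i0, hi0⟩ := Function.ne_iff.mp hne
  refine ⟨((List.finRange k).map fun i => List.replicate (m - ms i) (e i)).flatten, ?_⟩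
  have hperm : ∀ w : List α, w ∈ permCl ({u} : Language α) ↔ w.Perm u := by
    intro w
    constructor
    · rintro ⟨v, hv, hp⟩
      rwa [Set.mem_singleton_iff.mp hv] at hp
    · intro hp
      exact ⟨u, rfl, hp⟩
  rw [hperm, hperm]
  intro hiff
  have h1 : ((((List.finRange k).map fun i => List.replicate (ms i) (e i)).flatten) ++
      (((List.finRange k).map fun i => List.replicate (m - ms i) (e i)).flatten)).Perm u := by
    rw [List.perm_iff_count]
    intro a
    rw [List.count_append, countF, countF, hu, countF]
    have := hms (e.symm a)
    omega
  have h2 := hiff.mp h1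
  rw [List.perm_iff_count] at h2
  have h3 := h2 (e i0)
  rw [List.count_append, countF, countF, hu, countF, Equiv.symm_apply_apply] at h3
  have := hms i0
  have := hns i0
  omega
end

section
/- The class of APC languages (level 3/2 of the Straubing-Thérien hierarchy) is closed under commutative closure: if L = union over i of Sigma_0^{(i)*} a_1^{(i)} Sigma_1^{(i)*} ... a_{n_i}^{(i)} Sigma_{n_i}^{(i)*}, then perm(L) = union over i of ( perm(a_1^{(i)} ... a_{n_i}^{(i)}) shuffled with Gamma^{(i)*} ), where Gamma^{(i)} is the union of Sigma_0^{(i)},...,Sigma_{n_i}^{(i)}; in particular perm(L) is again an APC. -/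
open List

/-!
A word of `Σ₀^* a₁ Σ₁^* ⋯ aₙ Σₙ^*` is a rearrangement of `a₁⋯aₙ ++ v` for a word `v` over
`Γ = Σ₀ ∪ ⋯ ∪ Σₙ`; conversely every such `a₁⋯aₙ ++ v` can be rearranged into the atom by
sending each letter of `v` to a block `Σᵢ` containing it. Since the rearrangements of `s ++ v`
are exactly the shuffles of a rearrangement of `s` with a rearrangement of `v`, the commutative
closure of the atom is `perm(a₁⋯aₙ) ⧢ Γ^*`. This language is again an APC: it is the union,
over the finitely many rearrangements `σ` of `a₁⋯aₙ`, of the atoms `Γ^* σ₁ Γ^* ⋯ σₙ Γ^*`.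
-/

variable {α : Type}

theorem IsShuffle.perm {u v w : List α} (h : IsShuffle u v w) : w.Perm (u ++ v) := by
  induction h with
  | nil => rfl
  | left _ ih => exact ih.cons _
  | right _ ih => exact (ih.cons _).trans perm_middle.symm

theorem exists_isShuffle_of_perm_append {w u v : List α} (h : w.Perm (u ++ v)) :
    ∃ u' v', u'.Perm u ∧ v'.Perm v ∧ IsShuffle u' v' w := by
  induction w generalizing u v with
  | nil =>
    obtain ⟨rfl, rfl⟩ := List.append_eq_nil_iff.1 h.symm.eq_nil
    exact ⟨[], [], .rfl, .rfl, .nil⟩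
  | cons a w ih =>
    rcases List.mem_append.1 (h.subset mem_cons_self) with hu | hv
    · obtain ⟨u₁, u₂, rfl⟩ := List.append_of_mem hu
      have hw : w.Perm (u₁ ++ u₂ ++ v) := (h.trans (by simp)).cons_inv
      obtain ⟨u', v', hu', hv', hs⟩ := ih hw
      exact ⟨a :: u', v', (hu'.cons a).trans perm_middle.symm, hv', .left hs⟩
    · obtain ⟨v₁, v₂, rfl⟩ := List.append_of_mem hv
      have hw : w.Perm (u ++ (v₁ ++ v₂)) :=
        (h.trans (by simpa using perm_middle (l₁ := u ++ v₁))).cons_inv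
      obtain ⟨u', v', hu', hv', hs⟩ := ih hw
      exact ⟨u', a :: v', hu', (hv'.cons a).trans perm_middle.symm, .right hs⟩

theorem List.Perm.mem_subStar_iff {u v : List α} {Γ : Set α} (h : u.Perm v) :
    u ∈ subStar Γ ↔ v ∈ subStar Γ :=
  forall_congr' fun _ => imp_congr_left h.mem_iff

theorem subStar_mono {Γ Δ : Set α} (h : Γ ⊆ Δ) {w : List α} (hw : w ∈ subStar Γ) :
    w ∈ subStar Δ :=
  fun x hx => h (hw x hx)

theorem mem_lshuffle_permCl_singleton_subStar_iff {s w : List α} {Γ : Set α} :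
    w ∈ lshuffle (permCl {s}) (subStar Γ) ↔ ∃ v ∈ subStar Γ, w.Perm (s ++ v) := by
  constructor
  · rintro ⟨u, ⟨_, rfl, hu⟩, v, hv, hs⟩
    exact ⟨v, hv, hs.perm.trans (hu.append_right v)⟩
  · rintro ⟨v, hv, hw⟩
    obtain ⟨u', v', hu', hv', hs⟩ := exists_isShuffle_of_perm_append hw
    exact ⟨u', ⟨s, rfl, hu'⟩, v', hv'.mem_subStar_iff.2 hv, hs⟩

theorem mem_permCl_setOf_exists {β : Type} {l : List β} {f : β → Language α} {w : List α} :
    w ∈ permCl {w | ∃ b ∈ l, w ∈ f b} ↔ ∃ b ∈ l, w ∈ permCl (f b) := by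
  constructor
  · rintro ⟨v, ⟨b, hb, hv⟩, hw⟩
    exact ⟨b, hb, v, hv, hw⟩
  · rintro ⟨b, hb, v, hv, hw⟩
    exact ⟨v, ⟨b, hb, hv⟩, hw⟩

/-- The alphabet `Σ₀ ∪ Σ₁ ∪ ⋯ ∪ Σₙ` of the APC atom `apcAtom Σ₀ [(a₁, Σ₁), …, (aₙ, Σₙ)]`. -/
def apcAlphabet (Γ₀ : Set α) (rest : List (α × Set α)) : Set α :=
  Γ₀ ∪ {x | ∃ q ∈ rest, x ∈ q.2}

theorem apcAlphabet_cons (Γ₀ Γ₁ : Set α) (a : α) (rest : List (α × Set α)) :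
    apcAlphabet Γ₀ ((a, Γ₁) :: rest) = Γ₀ ∪ apcAlphabet Γ₁ rest := by
  ext x
  simp only [apcAlphabet, mem_cons, exists_eq_or_imp, Prod.exists, Set.mem_union,
    Set.mem_ofPred_eq]

theorem exists_perm_append_of_mem_apcAtom {Γ₀ : Set α} {rest : List (α × Set α)}
    {u : List α} (hu : u ∈ apcAtom Γ₀ rest) :
    ∃ v ∈ subStar (apcAlphabet Γ₀ rest), u.Perm (rest.map Prod.fst ++ v) := by
  induction rest generalizing Γ₀ u with
  | nil => exact ⟨u, subStar_mono Set.subset_union_left hu, .rfl⟩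
  | cons p rest ih =>
    obtain ⟨a, Γ₁⟩ := p
    obtain ⟨x, hx, _, ⟨_, rfl, z, hz, rfl⟩, rfl⟩ := hu
    obtain ⟨v, hv, hzv⟩ := ih hz
    refine ⟨x ++ v, ?_, ?_⟩
    · rw [apcAlphabet_cons]
      exact List.forall_mem_append.2
        ⟨subStar_mono Set.subset_union_left hx, subStar_mono Set.subset_union_right hv⟩
    · calc x ++ ([a] ++ z) ~ a :: (x ++ z) := perm_middle
        _ ~ a :: (x ++ (rest.map Prod.fst ++ v)) := (hzv.append_left x).cons a
        _ ~ a :: (rest.map Prod.fst ++ (x ++ v)) := (perm_append_comm_assoc ..).cons a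
        _ = ((a, Γ₁) :: rest).map Prod.fst ++ (x ++ v) := rfl

theorem exists_mem_apcAtom_perm_append {Γ₀ : Set α} {rest : List (α × Set α)}
    {v : List α} (hv : v ∈ subStar (apcAlphabet Γ₀ rest)) :
    ∃ u ∈ apcAtom Γ₀ rest, u.Perm (rest.map Prod.fst ++ v) := by
  classical
  induction rest generalizing Γ₀ v with
  | nil => exact ⟨v, fun x hx => by simpa [apcAlphabet] using hv x hx, .rfl⟩
  | cons p rest ih =>
    obtain ⟨a, Γ₁⟩ := p
    rw [apcAlphabet_cons] at hv
    -- the letters of `v` outside `Γ₀` go into the later blocks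
    set v₀ := v.filter (· ∈ Γ₀)
    set v₁ := v.filter fun x => !decide (x ∈ Γ₀)
    have hv₀ : v₀ ∈ subStar Γ₀ := fun x hx => by simpa using (List.mem_filter.1 hx).2
    have hv₁ : v₁ ∈ subStar (apcAlphabet Γ₁ rest) := fun x hx => by
      obtain ⟨hxv, hxΓ₀⟩ := List.mem_filter.1 hx
      exact (hv x hxv).resolve_left (by simpa using hxΓ₀)
    have hsplit : (v₀ ++ v₁).Perm v := List.filter_append_perm _ v
    obtain ⟨z, hz, hzv⟩ := ih hv₁
    refine ⟨v₀ ++ ([a] ++ z), ⟨v₀, hv₀, _, ⟨[a], rfl, z, hz, rfl⟩, rfl⟩, ?_⟩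
    calc v₀ ++ ([a] ++ z) ~ a :: (v₀ ++ z) := perm_middle
      _ ~ a :: (v₀ ++ (rest.map Prod.fst ++ v₁)) := (hzv.append_left v₀).cons a
      _ ~ a :: (rest.map Prod.fst ++ (v₀ ++ v₁)) := (perm_append_comm_assoc ..).cons a
      _ ~ a :: (rest.map Prod.fst ++ v) := (hsplit.append_left _).cons a
      _ = ((a, Γ₁) :: rest).map Prod.fst ++ v := rfl

theorem mem_permCl_apcAtom_iff {Γ₀ : Set α} {rest : List (α × Set α)} {w : List α} :
    w ∈ permCl (apcAtom Γ₀ rest) ↔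
      ∃ v ∈ subStar (apcAlphabet Γ₀ rest), w.Perm (rest.map Prod.fst ++ v) := by
  constructor
  · rintro ⟨u, hu, hwu⟩
    obtain ⟨v, hv, huv⟩ := exists_perm_append_of_mem_apcAtom hu
    exact ⟨v, hv, hwu.trans huv⟩
  · rintro ⟨v, hv, hwv⟩
    obtain ⟨u, hu, huv⟩ := exists_mem_apcAtom_perm_append hv
    exact ⟨u, hu, hwv.trans huv.symm⟩

theorem IsShuffle.mem_apcAtom {Γ : Set α} {u v w : List α} (h : IsShuffle u v w)
    (hv : v ∈ subStar Γ) : w ∈ apcAtom Γ (u.map (·, Γ)) := by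
  induction h with
  | nil => exact hv
  | @left u v w a _ ih =>
    exact ⟨[], by simp [subStar], [a] ++ w, ⟨[a], rfl, w, ih hv, rfl⟩, rfl⟩
  | @right u v w a _ ih =>
    obtain ⟨ha, hv⟩ := List.forall_mem_cons.1 hv
    cases u with
    | nil => exact List.forall_mem_cons.2 ⟨ha, ih hv⟩
    | cons b u =>
      obtain ⟨x, hx, y, hy, rfl⟩ := ih hv
      exact ⟨a :: x, List.forall_mem_cons.2 ⟨ha, hx⟩, y, hy, rfl⟩

theorem lshuffle_permCl_singleton_subStar_eq (s : List α) (Γ : Set α) :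
    lshuffle (permCl {s}) (subStar Γ) =
      {w | ∃ σ ∈ s.permutations, w ∈ apcAtom Γ (σ.map (·, Γ))} := by
  ext w
  constructor
  · rintro ⟨σ, ⟨_, rfl, hσ⟩, v, hv, hs⟩
    exact ⟨σ, List.mem_permutations.2 hσ, hs.mem_apcAtom hv⟩
  · rintro ⟨σ, hσ, hw⟩
    obtain ⟨v, hv, hwv⟩ := mem_permCl_apcAtom_iff.1 ⟨w, hw, .rfl⟩
    have hΓ : apcAlphabet Γ (σ.map (·, Γ)) ⊆ Γ := by
      rintro x (hx | ⟨q, hq, hx⟩)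
      · exact hx
      · obtain ⟨b, -, rfl⟩ := List.mem_map.1 hq
        exact hx
    refine mem_lshuffle_permCl_singleton_subStar_iff.2 ⟨v, subStar_mono hΓ hv, ?_⟩
    simp only [List.map_map, Function.comp_def, List.map_id'] at hwv
    exact hwv.trans ((List.mem_permutations.1 hσ).append_right v)

theorem isAPC_lshuffle_permCl_singleton_subStar (s : List α) (Γ : Set α) :
    IsAPC (lshuffle (permCl {s}) (subStar Γ)) := by
  refine ⟨s.permutations.map fun σ => (Γ, σ.map (·, Γ)), ?_⟩
  rw [lshuffle_permCl_singleton_subStar_eq]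
  ext w
  simp

theorem isAPC_setOf_exists_mem {β : Type} (l : List β) (f : β → Language α)
    (hf : ∀ b ∈ l, IsAPC (f b)) : IsAPC {w | ∃ b ∈ l, w ∈ f b} := by
  induction l with
  | nil => exact ⟨[], by ext; simp⟩
  | cons b l ih =>
    obtain ⟨P, hP⟩ := hf b mem_cons_self
    obtain ⟨Q, hQ⟩ := ih fun c hc => hf c (mem_cons_of_mem b hc)
    refine ⟨P ++ Q, Set.ext fun w => ?_⟩
    have hb : w ∈ f b ↔ _ := Set.ext_iff.1 hP w
    have hl : (∃ c ∈ l, w ∈ f c) ↔ _ := Set.ext_iff.1 hQ w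
    show (∃ c ∈ b :: l, w ∈ f c) ↔ ∃ p ∈ P ++ Q, w ∈ apcAtom p.1 p.2
    simp only [List.mem_cons, List.mem_append, or_and_right, exists_or, exists_eq_left]
    exact or_congr hb hl

theorem permCl_setOf_mem_apcAtom (parts : List (Set α × List (α × Set α))) :
    permCl {w | ∃ p ∈ parts, w ∈ apcAtom p.1 p.2} = {w | ∃ p ∈ parts,
      w ∈ lshuffle (permCl {p.2.map Prod.fst}) (subStar (apcAlphabet p.1 p.2))} := by
  ext w
  simp only [mem_permCl_setOf_exists, mem_permCl_apcAtom_iff,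
    mem_lshuffle_permCl_singleton_subStar_iff]
  rfl

/-- For an APC `L = ⋃ᵢ Σ₀⁽ⁱ⁾* a₁⁽ⁱ⁾ ⋯ aₙᵢ⁽ⁱ⁾ Σₙᵢ⁽ⁱ⁾*`,
`perm(L) = ⋃ᵢ perm(a₁⁽ⁱ⁾ ⋯ aₙᵢ⁽ⁱ⁾) ⧢ Γ⁽ⁱ⁾*` where `Γ⁽ⁱ⁾ = Σ₀⁽ⁱ⁾ ∪ … ∪ Σₙᵢ⁽ⁱ⁾`;
in particular `perm(L)` is again an APC. -/
theorem stmt10 {α : Type} (parts : List (Set α × List (α × Set α)))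
    (L : Language α) (hL : L = {w | ∃ p ∈ parts, w ∈ apcAtom p.1 p.2}) :
    permCl L = {w | ∃ p ∈ parts,
        w ∈ lshuffle (permCl ({p.2.map Prod.fst} : Language α))
              (subStar (p.1 ∪ {x | ∃ q ∈ p.2, x ∈ q.2}))}
    ∧ IsAPC (permCl L) := by
  subst hL
  have hperm := permCl_setOf_mem_apcAtom parts
  exact ⟨hperm, hperm ▸ isAPC_setOf_exists_mem parts _ fun p _ =>
    isAPC_lshuffle_permCl_singleton_subStar _ _⟩
end

section
/- The class of APC languages is not closed under complementation, and level 3/2 of the Straubing-Thérien hierarchy is not closed under commutative closure of complements: over Sigma = {a,b}, the complement of Sigma^* aa Sigma^* ∪ Sigma^* bb Sigma^* ∪ b Sigma^* ∪ Sigma^* a equals (ab)^*, and perm((ab)^*) = { u : |u|_a = |u|_b } is not regular. -/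
open List

/-!
`Σ*aaΣ* ∪ Σ*bbΣ* ∪ bΣ* ∪ Σ*a` is a union of four APC atoms, and a word avoids all four patterns
exactly when it is `(ab)ⁿ`. A word of an atom `Σ₀^* a₁ Σ₁^* ⋯ aₙ Σₙ^*` longer than `n` has a letter
inside some block `Σᵢ^*`, and doubling that letter stays in the atom; as `(ab)^*` has arbitrarily
long words but none containing a letter twice in a row, it is not APC. The left quotients of
`{u : |u|_a = |u|_b}` by the words `aⁿ` are pairwise distinct (`bⁿ` separates them), so by
Myhill–Nerode this language is not regular.
-/

namespace Language

variable {α : Type*}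

theorem mem_kstar_singleton {u w : List α} :
    w ∈ KStar.kstar ({u} : Language α) ↔ ∃ n, w = (replicate n u).flatten := by
  rw [mem_kstar]
  constructor
  · rintro ⟨S, rfl, hS⟩
    exact ⟨S.length, by rw [← eq_replicate_iff.mpr ⟨rfl, hS⟩]⟩
  · rintro ⟨n, rfl⟩
    exact ⟨_, rfl, fun y hy => eq_of_mem_replicate hy⟩

theorem mem_kstar_singleton_iff_eq_nil_or {u w : List α} :
    w ∈ KStar.kstar ({u} : Language α) ↔
      w = [] ∨ ∃ v ∈ KStar.kstar ({u} : Language α), w = u ++ v := by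
  simp only [mem_kstar_singleton]
  constructor
  · rintro ⟨_ | n, rfl⟩
    · exact Or.inl rfl
    · exact Or.inr ⟨_, ⟨n, rfl⟩, by simp [replicate_succ]⟩
  · rintro (rfl | ⟨v, ⟨n, rfl⟩, rfl⟩)
    · exact ⟨0, rfl⟩
    · exact ⟨n + 1, by simp [replicate_succ]⟩

theorem not_isRegular_of_injective_leftQuotient {L : Language α} {f : ℕ → List α}
    (hf : Function.Injective (L.leftQuotient ∘ f)) : ¬ L.IsRegular := fun hL =>
  (Set.infinite_range_of_injective hf).mono (Set.range_comp_subset_range _ _)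
    hL.finite_range_leftQuotient

theorem not_isRegular_setOf_count_eq [BEq α] [LawfulBEq α] {a b : α} (hab : a ≠ b) :
    ¬ IsRegular {u : List α | u.count a = u.count b} := by
  set L : Language α := {u | u.count a = u.count b}
  have hmem (n k : ℕ) : replicate k b ∈ L.leftQuotient (replicate n a) ↔ n = k :=
    show count a (replicate n a ++ replicate k b) = count b (replicate n a ++ replicate k b) ↔ _ by
      simp [count_replicate, hab, hab.symm]
  refine not_isRegular_of_injective_leftQuotient (f := (replicate · a)) fun m n hmn => ?_
  have hm : replicate m b ∈ L.leftQuotient (replicate n a) :=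
    congrArg (replicate m b ∈ ·) hmn ▸ (hmem m m).2 rfl
  exact ((hmem n m).1 hm).symm

end Language

section APC

variable {α : Type}

@[simp] theorem nil_mem_subStar (Γ : Set α) : [] ∈ subStar Γ := fun _ h => absurd h not_mem_nil

@[simp] theorem mem_subStar_univ (w : List α) : w ∈ subStar (Set.univ : Set α) :=
  fun _ _ => trivial

@[simp] theorem mem_subStar_empty {w : List α} : w ∈ subStar (∅ : Set α) ↔ w = [] :=
  eq_nil_iff_forall_not_mem.symm

@[simp] theorem mem_apcAtom_nil {Γ : Set α} {w : List α} : w ∈ apcAtom Γ [] ↔ w ∈ subStar Γ :=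
  Iff.rfl

theorem mem_apcAtom_cons {Γ₀ Γ : Set α} {a : α} {l : List (α × Set α)} {w : List α} :
    w ∈ apcAtom Γ₀ ((a, Γ) :: l) ↔ ∃ u ∈ subStar Γ₀, ∃ v ∈ apcAtom Γ l, w = u ++ a :: v := by
  simp only [apcAtom, Language.mem_mul]
  constructor
  · rintro ⟨u, hu, _, ⟨_, rfl, v, hv, rfl⟩, rfl⟩
    exact ⟨u, hu, v, hv, rfl⟩
  · rintro ⟨u, hu, v, hv, rfl⟩
    exact ⟨u, hu, a :: v, ⟨[a], rfl, v, hv, rfl⟩, rfl⟩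

theorem IsAPC.add {L M : Language α} (hL : IsAPC L) (hM : IsAPC M) : IsAPC (L + M) := by
  obtain ⟨p, rfl⟩ := hL
  obtain ⟨q, rfl⟩ := hM
  refine ⟨p ++ q, Set.ext fun w => ?_⟩
  simp only [Set.mem_ofPred_eq, mem_append, or_and_right, exists_or]
  exact Iff.rfl

theorem isAPC_setOf_infix_pair (c : α) : IsAPC {w : List α | [c, c] <:+: w} := by
  refine ⟨[(Set.univ, [(c, ∅), (c, Set.univ)])], Set.ext fun w => ?_⟩
  simp [mem_apcAtom_cons, IsInfix, eq_comm]

theorem isAPC_setOf_eq_cons (c : α) : IsAPC {w : List α | ∃ t, w = c :: t} := by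
  refine ⟨[(∅, [(c, Set.univ)])], Set.ext fun w => ?_⟩
  simp [mem_apcAtom_cons]

theorem isAPC_setOf_eq_append_singleton (c : α) : IsAPC {w : List α | ∃ t, w = t ++ [c]} := by
  refine ⟨[(Set.univ, [(c, ∅)])], Set.ext fun w => ?_⟩
  simp [mem_apcAtom_cons]

theorem exists_letter_doubling_mem_apcAtom {Γ₀ : Set α} {l : List (α × Set α)} {w : List α}
    (hw : w ∈ apcAtom Γ₀ l) (hlen : l.length < w.length) :
    ∃ x c y, w = x ++ c :: y ∧ x ++ c :: c :: y ∈ apcAtom Γ₀ l := by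
  induction l generalizing Γ₀ w with
  | nil =>
    obtain ⟨c, y, rfl⟩ := exists_cons_of_length_pos hlen
    exact ⟨[], c, y, rfl, fun x hx => hw x (by simp_all)⟩
  | cons p l ih =>
    obtain ⟨a, Γ⟩ := p
    obtain ⟨u, hu, v, hv, rfl⟩ := mem_apcAtom_cons.1 hw
    rcases u with _ | ⟨c, u⟩
    · obtain ⟨x, c, y, rfl, hxy⟩ := ih hv (by simpa using hlen)
      exact ⟨a :: x, c, y, rfl, mem_apcAtom_cons.2 ⟨[], by simp, _, hxy, rfl⟩⟩
    · exact ⟨[], c, u ++ a :: v, rfl,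
        mem_apcAtom_cons.2 ⟨c :: c :: u, fun x hx => hu x (by simp_all), v, hv, rfl⟩⟩

theorem not_isAPC_of_forall_not_infix_pair {L : Language α}
    (hlong : ∀ n, ∃ w ∈ L, n < w.length) (hpair : ∀ w ∈ L, ∀ c, ¬ [c, c] <:+: w) :
    ¬ IsAPC L := by
  rintro ⟨parts, rfl⟩
  obtain ⟨w, ⟨p, hp, hw⟩, hlen⟩ := hlong (parts.map (·.2.length)).sum
  have hpw : p.2.length < w.length :=
    (single_le_sum (fun _ _ => Nat.zero_le _) _ (mem_map_of_mem hp)).trans_lt hlen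
  obtain ⟨x, c, y, rfl, hxy⟩ := exists_letter_doubling_mem_apcAtom hw hpw
  exact hpair _ ⟨p, hp, hxy⟩ c ⟨x, y, by simp⟩

end APC

section AbStar

open Language

abbrev abStar : Language Bool := KStar.kstar {[true, false]}

theorem count_flatten_replicate_ab (n : ℕ) (c : Bool) :
    (replicate n [true, false]).flatten.count c = n := by
  cases c <;> simp [count_flatten]

theorem cons_cons_mem_abStar {c d : Bool} {w : List Bool} :
    c :: d :: w ∈ abStar ↔ c = true ∧ d = false ∧ w ∈ abStar := by
  rw [mem_kstar_singleton_iff_eq_nil_or]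
  simp only [reduceCtorEq, false_or, cons_append, nil_append, cons.injEq]
  exact ⟨fun ⟨_, hv, hc, hd, hw⟩ => ⟨hc, hd, hw ▸ hv⟩, fun ⟨hc, hd, hw⟩ => ⟨w, hw, hc, hd, rfl⟩⟩

theorem singleton_notMem_abStar (c : Bool) : [c] ∉ abStar := by
  rw [mem_kstar_singleton_iff_eq_nil_or]
  simp

theorem mem_abStar_iff : ∀ {w : List Bool}, w ∈ abStar ↔
    ¬ [true, true] <:+: w ∧ ¬ [false, false] <:+: w ∧ ¬ [false] <+: w ∧ ¬ [true] <:+ w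
  | [] => by simp [nil_mem_kstar]
  | [c] => by cases c <;> simp [singleton_notMem_abStar]
  | c :: d :: w => by
    rw [cons_cons_mem_abStar, mem_abStar_iff (w := w)]
    cases c <;> cases d <;> simp [infix_cons_iff, suffix_cons_iff, and_assoc, and_left_comm]

theorem compl_setOf_eq_abStar :
    ({w : List Bool | [true, true] <:+: w} ∪ {w | [false, false] <:+: w}
      ∪ {w | ∃ t, w = false :: t} ∪ {w | ∃ t, w = t ++ [true]})ᶜ = abStar := by
  refine Set.ext fun w => Iff.trans ?_ mem_abStar_iff.symm
  simp [IsPrefix, IsSuffix, eq_comm, and_assoc]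

theorem not_isAPC_abStar : ¬ IsAPC abStar := by
  refine not_isAPC_of_forall_not_infix_pair (fun n => ?_) fun w hw c => ?_
  · refine ⟨(replicate (n + 1) [true, false]).flatten, mem_kstar_singleton.2 ⟨_, rfl⟩, ?_⟩
    simp only [length_flatten, map_replicate, length_cons, length_nil, sum_replicate, smul_eq_mul]
    omega
  · obtain ⟨htt, hff, -, -⟩ := mem_abStar_iff.1 hw
    cases c
    exacts [hff, htt]

theorem count_true_eq_count_false_of_mem_abStar {w : List Bool} (hw : w ∈ abStar) :
    w.count true = w.count false := by
  obtain ⟨n, rfl⟩ := mem_kstar_singleton.1 hw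
  simp only [count_flatten_replicate_ab]

theorem permCl_abStar : permCl abStar = {u : List Bool | u.count true = u.count false} := by
  refine Set.ext fun u => ⟨fun ⟨v, hv, huv⟩ => ?_, fun (hu : u.count true = u.count false) => ?_⟩
  · show u.count true = u.count false
    simpa only [huv.count_eq] using count_true_eq_count_false_of_mem_abStar hv
  · refine ⟨(replicate (u.count true) [true, false]).flatten, mem_kstar_singleton.2 ⟨_, rfl⟩,
      perm_iff_count.2 ?_⟩
    rintro (_ | _) <;> simp [count_flatten_replicate_ab, hu]

end AbStar

/-- APCs are not closed under complement: over `Σ = {a, b}` (here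
`a = true`, `b = false`), the complement of
`Σ*aaΣ* ∪ Σ*bbΣ* ∪ bΣ* ∪ Σ*a` is `(ab)*`, and `perm((ab)*) = {u : |u|_a = |u|_b}`
is not regular. -/
theorem stmt11 :
    (∃ L : Language Bool, IsAPC L ∧ ¬ IsAPC (Lᶜ : Set (List Bool)))
    ∧ (({w : List Bool | [true, true] <:+: w} ∪ {w | [false, false] <:+: w}
          ∪ {w | ∃ t, w = false :: t} ∪ {w | ∃ t, w = t ++ [true]})ᶜ
        = KStar.kstar ({[true, false]} : Language Bool))
    ∧ permCl (KStar.kstar ({[true, false]} : Language Bool))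
        = {u : List Bool | u.count true = u.count false}
    ∧ ¬ ∃ (τ : Type) (_ : Fintype τ) (D : DFA Bool τ),
        D.accepts = {u : List Bool | u.count true = u.count false} := by
  have hAPC := (((isAPC_setOf_infix_pair true).add (isAPC_setOf_infix_pair false)).add
    (isAPC_setOf_eq_cons false)).add (isAPC_setOf_eq_append_singleton true)
  exact ⟨⟨_, hAPC, compl_setOf_eq_abStar ▸ not_isAPC_abStar⟩, compl_setOf_eq_abStar,
    permCl_abStar, Language.not_isRegular_setOf_count_eq (by decide)⟩
end

section
/- For nonnegative integers i, j, k with i + j + k = n - 1, let f(i,j,k) = (i+1)(j+1) + kj + ki + k. Then max f over all such triples equals (n^2 + n + 1)/3 if n ≡ 1 (mod 3), and (n^2 + n)/3 otherwise. -/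
open List

lemma key_ineq (i j k : ℕ) : 3*(i*j + j*k + k*i) ≤ (i+j+k)^2 := by
  zify
  nlinarith [sq_nonneg ((i:ℤ)-j), sq_nonneg ((j:ℤ)-k), sq_nonneg ((k:ℤ)-i)]


/-- For `f(i,j,k) = (i+1)(j+1) + kj + ki + k` maximized over nonnegative
integers with `i + j + k = n - 1`, the maximum is `(n² + n + 1)/3` if `n ≡ 1 (mod 3)`
and `(n² + n)/3` otherwise. -/
theorem stmt15 (n : ℕ) (hn : 1 ≤ n) :
    (∀ i j k : ℕ, i + j + k = n - 1 →
      (i + 1) * (j + 1) + k * j + k * i + k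
        ≤ (if n % 3 = 1 then (n ^ 2 + n + 1) / 3 else (n ^ 2 + n) / 3))
    ∧ (∃ i j k : ℕ, i + j + k = n - 1 ∧
        (i + 1) * (j + 1) + k * j + k * i + k
          = (if n % 3 = 1 then (n ^ 2 + n + 1) / 3 else (n ^ 2 + n) / 3)) := by
  set q := n / 3 with hqdef
  have hmod : n % 3 = 0 ∨ n % 3 = 1 ∨ n % 3 = 2 := by omega
  have hqr : n = 3 * q + n % 3 := by omega
  rcases hmod with h | h | h
  · -- n = 3q, q ≥ 1
    obtain ⟨m, hm⟩ : ∃ m, q = m + 1 := ⟨q - 1, by omega⟩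
    have hn' : n = 3 * m + 3 := by omega
    have hrhs : (n ^ 2 + n) / 3 = 3*m^2 + 7*m + 4 := by
      have e : n ^ 2 + n = 3 * (3*m^2 + 7*m + 4) := by rw [hn']; ring
      rw [e, Nat.mul_div_cancel_left _ (by norm_num)]
    rw [if_neg (by omega), hrhs]
    constructor
    · intro i j k hijk
      have hk := key_ineq i j k
      have hs : i + j + k = 3*m + 2 := by omega
      have h2 : (i+j+k)^2 = 9*m^2 + 12*m + 4 := by rw [hs]; ring
      have hF : (i+1)*(j+1)+k*j+k*i+k = i*j+j*k+k*i + (i+j+k) + 1 := by ring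
      rw [h2] at hk
      rw [hF]
      omega
    · exact ⟨m+1, m+1, m, by omega, by ring⟩
  · have hn' : n = 3 * q + 1 := by omega
    have hrhs : (n ^ 2 + n + 1) / 3 = 3*q^2 + 3*q + 1 := by
      have e : n ^ 2 + n + 1 = 3 * (3*q^2 + 3*q + 1) := by rw [hn']; ring
      rw [e, Nat.mul_div_cancel_left _ (by norm_num)]
    rw [if_pos h, hrhs]
    constructor
    · intro i j k hijk
      have hk := key_ineq i j k
      have hs : i + j + k = 3*q := by omega
      have h2 : (i+j+k)^2 = 9*q^2 := by rw [hs]; ring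
      have hF : (i+1)*(j+1)+k*j+k*i+k = i*j+j*k+k*i + (i+j+k) + 1 := by ring
      rw [h2] at hk
      rw [hF]
      omega
    · exact ⟨q, q, q, by omega, by ring⟩
  · have hn' : n = 3 * q + 2 := by omega
    have hrhs : (n ^ 2 + n) / 3 = 3*q^2 + 5*q + 2 := by
      have e : n ^ 2 + n = 3 * (3*q^2 + 5*q + 2) := by rw [hn']; ring
      rw [e, Nat.mul_div_cancel_left _ (by norm_num)]
    rw [if_neg (by omega), hrhs]
    constructor
    · intro i j k hijk
      have hk := key_ineq i j k
      have hs : i + j + k = 3*q + 1 := by omega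
      have h2 : (i+j+k)^2 = 9*q^2 + 6*q + 1 := by rw [hs]; ring
      have hF : (i+1)*(j+1)+k*j+k*i+k = i*j+j*k+k*i + (i+j+k) + 1 := by ring
      rw [h2] at hk
      rw [hF]
      omega
    · exact ⟨q+1, q, q, by omega, by ring⟩
end

section
/- If U and V are commutative languages (closed under permutation of letters of their words), then perm(U ⧢ V) = U ⧢ V; more generally, for any languages U, V, perm(U ⧢ V) = perm(U) ⧢ perm(V), and in particular every strict shuffle language L (one satisfying L = shuffle over a in Sigma of pi_a(L)) is commutative: perm(L) = L. -/
open List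

/-! A shuffle of `u` and `v` is a permutation of `u ++ v`; conversely, peeling off the first
letter of a permutation of `u ++ v` and charging it to `u` or to `v` shows that every
permutation of `u ++ v` is a shuffle of a permutation of `u` with a permutation of `v`.
Hence `perm (U ⧢ V) = perm U ⧢ perm V`, so shuffles of commutative languages are commutative.
Unary projections are commutative, and a strict shuffle language is an iterated shuffle of them. -/

theorem List.exists_perm_cons_of_mem {α : Type} {a : α} {l : List α} (h : a ∈ l) :
    ∃ l', l.Perm (a :: l') :=
  let ⟨s, t, hl⟩ := List.append_of_mem h
  ⟨s ++ t, hl ▸ List.perm_middle⟩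

namespace IsShuffle

variable {α : Type}

theorem perm_append {u v w : List α} (h : IsShuffle u v w) : w.Perm (u ++ v) := by
  induction h with
  | nil => exact List.Perm.refl _
  | left _ ih => exact ih.cons _
  | right _ ih => exact (ih.cons _).trans List.perm_middle.symm

theorem append (u v : List α) : IsShuffle u v (u ++ v) := by
  induction u with
  | nil =>
    induction v with
    | nil => exact nil
    | cons _ _ ih => exact ih.right
  | cons _ _ ih => exact ih.left

theorem exists_of_perm_append {u v w : List α} (h : w.Perm (u ++ v)) :
    ∃ u' v', u'.Perm u ∧ v'.Perm v ∧ IsShuffle u' v' w := by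
  induction w generalizing u v with
  | nil =>
    obtain ⟨rfl, rfl⟩ := List.append_eq_nil_iff.1 h.symm.eq_nil
    exact ⟨[], [], List.Perm.refl _, List.Perm.refl _, nil⟩
  | cons a w ih =>
    rcases List.mem_append.1 (h.subset List.mem_cons_self) with hu | hv
    · obtain ⟨u₀, hu₀⟩ := List.exists_perm_cons_of_mem hu
      have hw : (a :: w).Perm (a :: (u₀ ++ v)) := h.trans (hu₀.append_right v)
      obtain ⟨u', v', hu', hv', hs⟩ := ih hw.cons_inv
      exact ⟨a :: u', v', (hu'.cons a).trans hu₀.symm, hv', hs.left⟩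
    · obtain ⟨v₀, hv₀⟩ := List.exists_perm_cons_of_mem hv
      have hw : (a :: w).Perm (a :: (u ++ v₀)) :=
        h.trans ((hv₀.append_left u).trans List.perm_middle)
      obtain ⟨u', v', hu', hv', hs⟩ := ih hw.cons_inv
      exact ⟨u', a :: v', hu', (hv'.cons a).trans hv₀.symm, hs.right⟩

end IsShuffle

section PermClosure

variable {α : Type}

theorem permCl_lshuffle (U V : Language α) :
    permCl (lshuffle U V) = lshuffle (permCl U) (permCl V) := by
  ext w
  constructor
  · rintro ⟨_, ⟨u, hu, v, hv, hs⟩, hw⟩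
    obtain ⟨u', v', hu', hv', hs'⟩ := IsShuffle.exists_of_perm_append (hw.trans hs.perm_append)
    exact ⟨u', ⟨u, hu, hu'⟩, v', ⟨v, hv, hv'⟩, hs'⟩
  · rintro ⟨u', ⟨u, hu, hu'⟩, v', ⟨v, hv, hv'⟩, hs⟩
    exact ⟨u ++ v, ⟨u, hu, v, hv, IsShuffle.append u v⟩, hs.perm_append.trans (hu'.append hv')⟩

theorem permCl_lshuffle_of_permCl_eq {U V : Language α} (hU : permCl U = U)
    (hV : permCl V = V) : permCl (lshuffle U V) = lshuffle U V := by
  rw [permCl_lshuffle, hU, hV]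

theorem permCl_singleton_nil : permCl ({[]} : Language α) = {[]} := by
  ext w
  constructor
  · rintro ⟨_, rfl, hw⟩
    exact hw.eq_nil
  · rintro rfl
    exact ⟨[], rfl, List.Perm.refl _⟩

theorem permCl_shuffleList {Ls : List (Language α)} (h : ∀ L ∈ Ls, permCl L = L) :
    permCl (shuffleList Ls) = shuffleList Ls := by
  induction Ls with
  | nil => exact permCl_singleton_nil
  | cons L Ls ih =>
    exact permCl_lshuffle_of_permCl_eq (h L List.mem_cons_self)
      (ih fun M hM => h M (List.mem_cons_of_mem _ hM))

theorem permCl_proj [DecidableEq α] (a : α) (L : Language α) : permCl (proj a L) = proj a L := by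
  ext w
  constructor
  · rintro ⟨_, ⟨x, hx, rfl⟩, hw⟩
    rw [List.perm_replicate.1 hw]
    exact ⟨x, hx, rfl⟩
  · intro hw
    exact ⟨w, hw, List.Perm.refl _⟩

theorem IsStrictShuffle.permCl_eq [Fintype α] [DecidableEq α] {L : Language α}
    (hL : IsStrictShuffle L) : permCl L = L := by
  rw [hL]
  refine permCl_shuffleList fun M hM => ?_
  obtain ⟨a, -, rfl⟩ := List.mem_map.1 hM
  exact permCl_proj a L

end PermClosure

/-- If `U, V` are commutative then `perm(U ⧢ V) = U ⧢ V`; in general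
`perm(U ⧢ V) = perm(U) ⧢ perm(V)`; and every strict shuffle language is commutative. -/
theorem stmt18 {α : Type} [Fintype α] [DecidableEq α] :
    (∀ U V : Language α, permCl U = U → permCl V = V →
      permCl (lshuffle U V) = lshuffle U V)
    ∧ (∀ U V : Language α, permCl (lshuffle U V) = lshuffle (permCl U) (permCl V))
    ∧ (∀ L : Language α, IsStrictShuffle L → permCl L = L) :=
  ⟨fun _ _ => permCl_lshuffle_of_permCl_eq, permCl_lshuffle, fun _ => IsStrictShuffle.permCl_eq⟩
end
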